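/- Let (T_n) be a scale with factors (κ_n) and for n ≥ 1 let A_n = [T_n/3, T_n/3 + T_{n-1} − 1] ∩ ℕ. Define R_∞ = ⋃_{n≥1} (A_n + T_n ℕ). Then R_∞ is a rational subset of ℕ: for every ε > 0 there is a finite union of arithmetic progressions Q with d̄(R_∞ △ Q) < ε. -/

import Mathlib

open Filter

/-- Upper asymptotic density of a set of naturals. -/
noncomputable def upperDensity (A : Set ℕ) : ℝ :=
  Filter.limsup (fun N => (Nat.card ↥(A ∩ Set.Iio N) : ℝ) / N) Filter.atTop

/-- The arithmetic progression `a + bℕ`. -/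
def AP (a b : ℕ) : Set ℕ := {n | ∃ k, n = a + b * k}

/-- `B` is a finite union of arithmetic progressions (with nonzero common differences). -/
def FinUnionAP (B : Set ℕ) : Prop :=
  ∃ s : Finset (ℕ × ℕ), (∀ p ∈ s, 1 ≤ p.2) ∧ B = ⋃ p ∈ s, AP p.1 p.2

/-- `A ⊆ ℕ` is a rational set: it can be approximated arbitrarily well in the
`d̄`-pseudometric by finite unions of arithmetic progressions. -/
def IsRationalSet (A : Set ℕ) : Prop :=
  ∀ ε : ℝ, 0 < ε → ∃ B : Set ℕ, FinUnionAP B ∧ upperDensity (symmDiff A B) < ε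

/-- `(T, κ)` is a scale. -/
structure IsScale (T κ : ℕ → ℕ) : Prop where
  kappa_zero : κ 0 = 3
  kappa_dvd : ∀ n, 3 * κ n ∣ κ (n + 1)
  T_zero_dvd : 3 ∣ T 0
  T_zero_pos : 0 < T 0
  T_succ : ∀ n, T (n + 1) = κ (n + 1) * T n
  ratio_tendsto : Filter.Tendsto (fun n => (κ (n + 1) : ℝ) / κ n) Filter.atTop Filter.atTop

/-- The set `A_n + T_n ℕ` where `A_n = [T_n/3, T_n/3 + T_{n-1} - 1] ∩ ℕ`. -/
def progBlock (T : ℕ → ℕ) (n : ℕ) : Set ℕ :=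
  {m | ∃ a ∈ Set.Ico (T n / 3) (T n / 3 + T (n - 1)), ∃ k, m = a + T n * k}

/-- The tail `R_∞ = ⋃_{n ≥ 1} (A_n + T_n ℕ)`. -/
def Rinfty (T : ℕ → ℕ) : Set ℕ := ⋃ n : ℕ, progBlock T (n + 1)

/-! The finite union `B_N = ⋃_{n ≤ N} (A_n + T_n ℕ)` is a finite union of arithmetic
progressions contained in `R_∞`, so `R_∞ △ B_N` is covered by the blocks with `n > N`.
Below `X` the block `A_n + T_n ℕ` is empty unless `T_n < 3X`, and then it has at most
`T_{n-1} (X / T_n + 1) ≤ 4X / κ_n` elements. Since `κ_n ≥ 3^{n+1}`, summing over `n > N`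
bounds the upper density of `R_∞ △ B_N` by a geometric tail `≤ 3^{-N}`. -/

theorem Set.ncard_biUnion_le {ι α : Type*} (s : Finset ι) (A : ι → Set α) :
    (⋃ i ∈ s, A i).ncard ≤ ∑ i ∈ s, (A i).ncard := by
  classical
  induction s using Finset.induction_on with
  | empty => simp
  | insert i s hi ih =>
    rw [Finset.set_biUnion_insert, Finset.sum_insert hi]
    exact (Set.ncard_union_le _ _).trans (Nat.add_le_add_left ih _)

theorem upperDensity_le_of_ncard_le {A : Set ℕ} {c : ℝ}
    (h : ∀ X : ℕ, ((A ∩ Set.Iio X).ncard : ℝ) ≤ c * X) : upperDensity A ≤ c := by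
  refine limsup_le_of_le (isCoboundedUnder_le_of_le atTop fun X => by positivity) ?_
  filter_upwards [eventually_gt_atTop 0] with X hX
  rw [Nat.card_coe_set_eq, div_le_iff₀ (by exact_mod_cast hX)]
  exact h X

theorem ncard_AP_inter_Iio_le (a : ℕ) {d : ℕ} (hd : 0 < d) (X : ℕ) :
    (AP a d ∩ Set.Iio X).ncard ≤ X / d + 1 := by
  have hsub : AP a d ∩ Set.Iio X ⊆ (fun k => a + d * k) '' Set.Iio (X / d + 1) := by
    rintro _ ⟨⟨k, rfl⟩, hk⟩
    refine ⟨k, Nat.lt_succ_of_le ((Nat.le_div_iff_mul_le hd).2 ?_), rfl⟩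
    rw [Set.mem_Iio] at hk
    linarith
  calc _ ≤ ((fun k => a + d * k) '' Set.Iio (X / d + 1)).ncard :=
        Set.ncard_le_ncard hsub ((Set.finite_Iio _).image _)
    _ ≤ (Set.Iio (X / d + 1)).ncard := Set.ncard_image_le (Set.finite_Iio _)
    _ = X / d + 1 := by simp

theorem finUnionAP_AP (a : ℕ) {d : ℕ} (hd : 0 < d) : FinUnionAP (AP a d) :=
  ⟨{(a, d)}, fun p hp => by rw [Finset.mem_singleton.1 hp]; exact hd, by simp⟩

theorem FinUnionAP.biUnion {ι : Type*} (s : Finset ι) {B : ι → Set ℕ}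
    (h : ∀ i ∈ s, FinUnionAP (B i)) : FinUnionAP (⋃ i ∈ s, B i) := by
  classical
  choose! t ht hB using h
  refine ⟨s.biUnion t, fun p hp => ?_, ?_⟩
  · obtain ⟨i, hi, hp⟩ := Finset.mem_biUnion.1 hp
    exact ht i hi p hp
  · rw [Finset.set_biUnion_biUnion]
    exact Set.iUnion₂_congr hB

theorem progBlock_eq_biUnion_AP (T : ℕ → ℕ) (n : ℕ) :
    progBlock T n = ⋃ a ∈ Finset.Ico (T n / 3) (T n / 3 + T (n - 1)), AP a (T n) := by
  ext m
  simp [progBlock, AP]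

section progBlock

variable {T : ℕ → ℕ} {n : ℕ}

theorem finUnionAP_progBlock (hT : 0 < T n) : FinUnionAP (progBlock T n) :=
  progBlock_eq_biUnion_AP T n ▸ FinUnionAP.biUnion _ fun a _ => finUnionAP_AP a hT

theorem div_three_le_of_mem_progBlock {m : ℕ} (hm : m ∈ progBlock T n) : T n / 3 ≤ m := by
  obtain ⟨a, ha, k, rfl⟩ := hm
  exact ha.1.trans (Nat.le_add_right _ _)

theorem ncard_progBlock_inter_Iio_le (hT : 0 < T n) (X : ℕ) :
    (progBlock T n ∩ Set.Iio X).ncard ≤ T (n - 1) * (X / T n + 1) := by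
  rw [progBlock_eq_biUnion_AP, Set.iUnion₂_inter]
  refine (Set.ncard_biUnion_le _ _).trans ?_
  refine (Finset.sum_le_sum fun a _ => ncard_AP_inter_Iio_le a hT X).trans ?_
  simp

end progBlock

namespace IsScale

variable {T κ : ℕ → ℕ} (h : IsScale T κ)
include h

theorem kappa_pos (n : ℕ) : 0 < κ n := by
  -- divisibility alone allows `κ` to vanish from some index on; the growth of the ratio forbids it
  obtain ⟨M, hM⟩ := eventually_atTop.1 (h.ratio_tendsto.eventually_gt_atTop 0)
  have hκ : κ (max n M + 1) ≠ 0 := fun h0 => by simpa [h0] using hM (max n M) (le_max_right _ _)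
  have hdvd : κ n ∣ κ (max n M + 1) :=
    Nat.rel_of_forall_rel_succ_of_le (· ∣ ·)
      (fun k => (Nat.dvd_mul_left _ _).trans (h.kappa_dvd k)) (by omega)
  exact Nat.pos_of_dvd_of_pos hdvd (Nat.pos_of_ne_zero hκ)

theorem three_pow_le_kappa (n : ℕ) : 3 ^ (n + 1) ≤ κ n := by
  induction n with
  | zero => simp [h.kappa_zero]
  | succ n ih =>
    have := Nat.le_of_dvd (h.kappa_pos (n + 1)) (h.kappa_dvd n)
    rw [pow_succ]
    omega

theorem T_pos (n : ℕ) : 0 < T n := by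
  induction n with
  | zero => exact h.T_zero_pos
  | succ n ih => rw [h.T_succ]; exact Nat.mul_pos (h.kappa_pos _) ih

theorem three_dvd_T (n : ℕ) : 3 ∣ T n := by
  induction n with
  | zero => exact h.T_zero_dvd
  | succ n ih => rw [h.T_succ]; exact ih.mul_left _

theorem strictMono_T : StrictMono T := by
  refine strictMono_nat_of_lt_succ fun n => ?_
  have h3 : 3 ≤ κ (n + 1) := (Nat.le_self_pow (by omega) 3).trans (h.three_pow_le_kappa _)
  rw [h.T_succ]
  nlinarith [h.T_pos n]

theorem ncard_progBlock_succ_inter_Iio_le (n X : ℕ) :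
    ((progBlock T (n + 1) ∩ Set.Iio X).ncard : ℝ) ≤ 4 * X / κ (n + 1) := by
  rcases lt_or_ge (T (n + 1)) (3 * X) with hTX | hTX
  · have hcard := ncard_progBlock_inter_Iio_le (h.T_pos (n + 1)) X
    rw [Nat.add_sub_cancel] at hcard
    have hκ : (0 : ℝ) < κ (n + 1) := by exact_mod_cast h.kappa_pos _
    have hT : (T (n + 1) : ℝ) = κ (n + 1) * T n := by exact_mod_cast h.T_succ n
    have hTX' : (T (n + 1) : ℝ) ≤ 3 * X := by exact_mod_cast hTX.le
    have hTpos : (0 : ℝ) < T n := by exact_mod_cast h.T_pos n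
    calc ((progBlock T (n + 1) ∩ Set.Iio X).ncard : ℝ)
        ≤ T n * (((X / T (n + 1) : ℕ) : ℝ) + 1) := by exact_mod_cast hcard
      _ ≤ T n * (X / T (n + 1) + 1) := by gcongr; exact Nat.cast_div_le
      _ = X / κ (n + 1) + T (n + 1) / κ (n + 1) := by rw [hT]; field_simp
      _ ≤ X / κ (n + 1) + 3 * X / κ (n + 1) := by gcongr
      _ = 4 * X / κ (n + 1) := by ring
  · have hempty : progBlock T (n + 1) ∩ Set.Iio X = ∅ := by
      refine Set.eq_empty_of_forall_notMem fun m ⟨hm, hmX⟩ => ?_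
      have := div_three_le_of_mem_progBlock hm
      rw [Set.mem_Iio] at hmX
      omega
    rw [hempty, Set.ncard_empty, Nat.cast_zero]
    positivity

theorem sum_inv_kappa_le (N M : ℕ) :
    ∑ n ∈ Finset.Ico N M, ((κ (n + 1) : ℝ))⁻¹ ≤ (1 / 3) ^ (N + 1) / 2 := by
  have hterm (n : ℕ) : ((κ (n + 1) : ℝ))⁻¹ ≤ (1 / 3) ^ n / 9 := by
    rw [show (1 / 3 : ℝ) ^ n / 9 = ((3 : ℝ) ^ (n + 2))⁻¹ by
      rw [one_div, inv_pow, pow_add]; ring]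
    exact inv_anti₀ (by positivity) (by exact_mod_cast h.three_pow_le_kappa (n + 1))
  calc ∑ n ∈ Finset.Ico N M, ((κ (n + 1) : ℝ))⁻¹
      ≤ ∑ n ∈ Finset.Ico N M, (1 / 3 : ℝ) ^ n / 9 := Finset.sum_le_sum fun n _ => hterm n
    _ = (∑ n ∈ Finset.Ico N M, (1 / 3 : ℝ) ^ n) / 9 := by rw [Finset.sum_div]
    _ ≤ (1 / 3) ^ N / (1 - 1 / 3) / 9 := by
      gcongr; exact geom_sum_Ico_le_of_lt_one (by norm_num) (by norm_num)
    _ = (1 / 3) ^ (N + 1) / 2 := by ring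

theorem Rinfty_diff_inter_Iio_subset (N X : ℕ) :
    (Rinfty T \ ⋃ n ∈ Finset.range N, progBlock T (n + 1)) ∩ Set.Iio X ⊆
      ⋃ n ∈ Finset.Ico N (3 * X), progBlock T (n + 1) ∩ Set.Iio X := by
  rintro m ⟨⟨hR, hB⟩, hmX⟩
  obtain ⟨j, hj⟩ := Set.mem_iUnion.1 hR
  have hNj : N ≤ j := by
    by_contra hjN
    exact hB (Set.mem_iUnion₂.2 ⟨j, Finset.mem_range.2 (by omega), hj⟩)
  have hT3 := h.three_dvd_T (j + 1)
  have hTm := div_three_le_of_mem_progBlock hj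
  have hjT : j + 1 ≤ T (j + 1) := h.strictMono_T.id_le (j + 1)
  rw [Set.mem_Iio] at hmX
  exact Set.mem_iUnion₂.2 ⟨j, Finset.mem_Ico.2 ⟨hNj, by omega⟩, hj, hmX⟩

theorem ncard_Rinfty_diff_inter_Iio_le (N X : ℕ) :
    (((Rinfty T \ ⋃ n ∈ Finset.range N, progBlock T (n + 1)) ∩ Set.Iio X).ncard : ℝ) ≤
      (1 / 3) ^ N * X := by
  have hfin : (⋃ n ∈ Finset.Ico N (3 * X), progBlock T (n + 1) ∩ Set.Iio X).Finite :=
    (Set.finite_Iio X).subset (Set.iUnion₂_subset fun _ _ => Set.inter_subset_right)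
  have hpos : 0 ≤ (1 / 3 : ℝ) ^ N * X := by positivity
  calc _ ≤ ((⋃ n ∈ Finset.Ico N (3 * X), progBlock T (n + 1) ∩ Set.Iio X).ncard : ℝ) := by
        exact_mod_cast Set.ncard_le_ncard (h.Rinfty_diff_inter_Iio_subset N X) hfin
    _ ≤ ∑ n ∈ Finset.Ico N (3 * X), ((progBlock T (n + 1) ∩ Set.Iio X).ncard : ℝ) := by
        exact_mod_cast Set.ncard_biUnion_le _ _
    _ ≤ ∑ n ∈ Finset.Ico N (3 * X), 4 * X / (κ (n + 1) : ℝ) :=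
        Finset.sum_le_sum fun n _ => h.ncard_progBlock_succ_inter_Iio_le n X
    _ = 4 * X * ∑ n ∈ Finset.Ico N (3 * X), ((κ (n + 1) : ℝ))⁻¹ := by
        simp only [div_eq_mul_inv, Finset.mul_sum]
    _ ≤ 4 * X * ((1 / 3) ^ (N + 1) / 2) := by gcongr; exact h.sum_inv_kappa_le N _
    _ ≤ (1 / 3) ^ N * X := by rw [pow_succ]; linarith

end IsScale

/-- The tail `R_∞` is a rational subset of `ℕ`. -/
theorem rinfty_isRational (T κ : ℕ → ℕ) (h : IsScale T κ) :
    IsRationalSet (Rinfty T) := by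
  intro ε hε
  obtain ⟨N, hN⟩ := exists_pow_lt_of_lt_one hε (by norm_num : (1 / 3 : ℝ) < 1)
  set B := ⋃ n ∈ Finset.range N, progBlock T (n + 1)
  have hBR : B ⊆ Rinfty T :=
    Set.iUnion₂_subset fun n _ => Set.subset_iUnion (fun n => progBlock T (n + 1)) n
  refine ⟨B, FinUnionAP.biUnion _ fun n _ => finUnionAP_progBlock (h.T_pos _), ?_⟩
  rw [symmDiff_comm, symmDiff_of_le hBR]
  exact (upperDensity_le_of_ncard_le (h.ncard_Rinfty_diff_inter_Iio_le N)).trans_lt hN
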